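/- Let (a_t)_{t≥1} be a sequence of nonnegative real numbers whose Cesàro means Z_t := t^{-1} Σ_{s=1}^t a_s converge to a finite limit, and let ρ ∈ (0,1). Then both τ^{-1} Σ_{t=1}^τ ρ^{t−1} a_t → 0 and τ^{-1} Σ_{t=1}^τ ρ^{τ−t} a_t → 0 as τ → ∞. -/
import Mathlib


open Filter Topology

private lemma sum_Icc_one_eq_range (f : ℕ → ℝ) (τ : ℕ) :
    ∑ t ∈ Finset.Icc 1 τ, f t = ∑ i ∈ Finset.range τ, f (i + 1) := by
  rw [← Finset.Ico_add_one_right_eq_Icc, Finset.sum_Ico_eq_sum_range]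
  simp [add_comm]

/-- **Cesàro-type averaging against geometric weights.**
If the Cesàro means `Z_t = t⁻¹ Σ_{s=1}^t a_s` of a nonnegative sequence converge to a finite
limit and `ρ ∈ (0,1)`, then both `τ⁻¹ Σ_{t=1}^τ ρ^{t−1} a_t → 0` and
`τ⁻¹ Σ_{t=1}^τ ρ^{τ−t} a_t → 0` as `τ → ∞`. -/
theorem stmt7 (a : ℕ → ℝ) (ha : ∀ t, 0 ≤ a t) (l : ℝ)
    (hZ : Tendsto (fun t : ℕ => (t : ℝ)⁻¹ * ∑ s ∈ Finset.Icc 1 t, a s) atTop (𝓝 l))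
    (ρ : ℝ) (hρ : ρ ∈ Set.Ioo (0 : ℝ) 1) :
    Tendsto (fun τ : ℕ => (τ : ℝ)⁻¹ * ∑ t ∈ Finset.Icc 1 τ, ρ ^ (t - 1) * a t) atTop (𝓝 0) ∧
    Tendsto (fun τ : ℕ => (τ : ℝ)⁻¹ * ∑ t ∈ Finset.Icc 1 τ, ρ ^ (τ - t) * a t) atTop (𝓝 0) := by
  obtain ⟨hρ0, hρ1⟩ := hρ
  have h1ρ : (0:ℝ) < 1 - ρ := by linarith
  set S : ℕ → ℝ := fun t => ∑ s ∈ Finset.Icc 1 t, a s with hSdef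
  have hSnn : ∀ t, 0 ≤ S t := fun t => Finset.sum_nonneg fun s _ => ha s
  -- `Z` is bounded above
  obtain ⟨C, hC⟩ := hZ.bddAbove_range
  have hZle : ∀ t : ℕ, (t:ℝ)⁻¹ * S t ≤ C := fun t => hC (Set.mem_range_self t)
  have hC0 : 0 ≤ C := le_trans (mul_nonneg (by positivity) (hSnn 1)) (hZle 1)
  have haC : ∀ t : ℕ, 1 ≤ t → a t ≤ C * t := by
    intro t ht
    have hat : a t ≤ S t :=
      Finset.single_le_sum (fun s _ => ha s) (Finset.mem_Icc.2 ⟨ht, le_refl t⟩)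
    have htpos : (0:ℝ) < t := by exact_mod_cast ht
    have : S t ≤ C * t := by
      have := hZle t
      have h2 : (t:ℝ) * ((t:ℝ)⁻¹ * S t) ≤ (t:ℝ) * C :=
        mul_le_mul_of_nonneg_left this htpos.le
      rw [← mul_assoc, mul_inv_cancel₀ htpos.ne', one_mul] at h2
      linarith [h2]
    linarith
  -- `a t / t → 0`
  have haT : Tendsto (fun t : ℕ => a t / t) atTop (𝓝 0) := by
    rw [← tendsto_add_atTop_iff_nat 1]
    have t1 : Tendsto (fun τ : ℕ => ((τ:ℝ)+1)⁻¹ * S (τ+1)) atTop (𝓝 l) := by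
      have h := hZ.comp (tendsto_add_atTop_nat 1)
      apply h.congr
      intro τ
      simp only [Function.comp]
      push_cast
      ring
    have t2 : Tendsto (fun τ : ℕ => (τ:ℝ) / ((τ:ℝ)+1)) atTop (𝓝 1) :=
      tendsto_natCast_div_add_atTop (1:ℝ)
    have t3 : Tendsto (fun τ : ℕ =>
        ((τ:ℝ)+1)⁻¹ * S (τ+1) - ((τ:ℝ)/((τ:ℝ)+1)) * ((τ:ℝ)⁻¹ * S τ)) atTop (𝓝 0) := by
      have := t1.sub (t2.mul hZ)
      simpa using this
    apply t3.congr'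
    filter_upwards [eventually_ge_atTop 1] with τ hτ
    have hτpos : (0:ℝ) < τ := by exact_mod_cast hτ
    have hτ1 : (0:ℝ) < (τ:ℝ) + 1 := by positivity
    have hstep : S (τ+1) = S τ + a (τ+1) :=
      Finset.sum_Icc_succ_top (by omega) a
    rw [hstep]
    push_cast
    field_simp
    ring
  -- First limit
  have hsum : Summable (fun n : ℕ => ((n:ℝ)+1) * ρ ^ n) := by
    have h1 : Summable (fun n : ℕ => (n:ℝ) * ρ ^ n) := by
      simpa using summable_pow_mul_geometric_of_norm_lt_one 1
        (r := ρ) (by rw [Real.norm_eq_abs]; rw [abs_of_pos hρ0]; exact hρ1)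
    have h2 : Summable (fun n : ℕ => ρ ^ n) := summable_geometric_of_lt_one hρ0.le hρ1
    simpa [add_mul] using h1.add h2
  set M : ℝ := ∑' n : ℕ, ((n:ℝ)+1) * ρ ^ n with hM
  have hbound1 : ∀ τ : ℕ, ∑ t ∈ Finset.Icc 1 τ, ρ ^ (t - 1) * a t ≤ C * M := by
    intro τ
    have step1 : ∑ t ∈ Finset.Icc 1 τ, ρ ^ (t - 1) * a t
        ≤ ∑ t ∈ Finset.Icc 1 τ, C * (((t:ℝ)) * ρ ^ (t-1)) := by
      apply Finset.sum_le_sum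
      intro t ht
      obtain ⟨ht1, _⟩ := Finset.mem_Icc.1 ht
      have := haC t ht1
      have hpow : (0:ℝ) ≤ ρ ^ (t-1) := by positivity
      calc ρ ^ (t-1) * a t ≤ ρ ^ (t-1) * (C * t) := by
            exact mul_le_mul_of_nonneg_left this hpow
        _ = C * ((t:ℝ) * ρ ^ (t-1)) := by ring
    have step2 : ∑ t ∈ Finset.Icc 1 τ, C * (((t:ℝ)) * ρ ^ (t-1))
        = C * ∑ i ∈ Finset.range τ, ((i:ℝ)+1) * ρ ^ i := by
      rw [← Finset.mul_sum]
      congr 1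
      rw [sum_Icc_one_eq_range (fun t => ((t:ℝ)) * ρ ^ (t-1)) τ]
      apply Finset.sum_congr rfl
      intro i _
      simp only [Nat.add_sub_cancel]
      push_cast
      ring
    have step3 : ∑ i ∈ Finset.range τ, ((i:ℝ)+1) * ρ ^ i ≤ M := by
      exact Summable.sum_le_tsum _ (fun i _ => by positivity) hsum
    calc ∑ t ∈ Finset.Icc 1 τ, ρ ^ (t - 1) * a t
        ≤ C * ∑ i ∈ Finset.range τ, ((i:ℝ)+1) * ρ ^ i := by rw [← step2]; exact step1
      _ ≤ C * M := mul_le_mul_of_nonneg_left step3 hC0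
  have hinv : Tendsto (fun τ : ℕ => (τ:ℝ)⁻¹) atTop (𝓝 0) :=
    tendsto_inv_atTop_zero.comp tendsto_natCast_atTop_atTop
  constructor
  · apply tendsto_of_tendsto_of_tendsto_of_le_of_le
      (g := fun _ : ℕ => (0:ℝ)) (h := fun τ : ℕ => (τ:ℝ)⁻¹ * (C * M))
      tendsto_const_nhds
    · have := hinv.mul_const (C * M)
      simpa using this
    · intro τ
      have : 0 ≤ ∑ t ∈ Finset.Icc 1 τ, ρ ^ (t - 1) * a t :=
        Finset.sum_nonneg fun t _ => mul_nonneg (by positivity) (ha t)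
      positivity
    · intro τ
      exact mul_le_mul_of_nonneg_left (hbound1 τ) (by positivity)
  · -- second limit
    rw [Metric.tendsto_atTop]
    intro ε hε
    set ε' : ℝ := ε * (1 - ρ) / 2 with hε'def
    have hε' : 0 < ε' := by positivity
    -- eventually a t ≤ ε' t
    have hev : ∀ᶠ t in atTop, a t / (t:ℝ) < ε' := haT.eventually_lt_const hε'
    obtain ⟨N, hN⟩ := (hev.and (eventually_ge_atTop 1)).exists_forall_of_atTop
    have haN : ∀ t, N ≤ t → a t ≤ ε' * t := by
      intro t ht
      obtain ⟨h1, h2⟩ := hN t ht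
      have htpos : (0:ℝ) < t := by exact_mod_cast h2
      have := (div_lt_iff₀ htpos).1 h1
      linarith
    set K : ℝ := ∑ t ∈ Finset.Icc 1 N, a t with hK
    have hK0 : 0 ≤ K := Finset.sum_nonneg fun t _ => ha t
    -- geometric sum bound
    have hgeo : ∀ τ : ℕ, ∑ t ∈ Finset.Icc 1 τ, ρ ^ (τ - t) ≤ (1 - ρ)⁻¹ := by
      intro τ
      have h1 : ∑ t ∈ Finset.Icc 1 τ, ρ ^ (τ - t) = ∑ k ∈ Finset.range τ, ρ ^ k := by
        rw [sum_Icc_one_eq_range (fun t => ρ ^ (τ - t)) τ]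
        have := Finset.sum_range_reflect (fun k => ρ ^ k) τ
        rw [← this]
        apply Finset.sum_congr rfl
        intro i hi
        have : τ - (i + 1) = τ - 1 - i := by omega
        rw [this]
      rw [h1, ← tsum_geometric_of_lt_one hρ0.le hρ1]
      exact Summable.sum_le_tsum _ (fun i _ => by positivity)
        (summable_geometric_of_lt_one hρ0.le hρ1)
    -- main bound
    have hbound2 : ∀ τ : ℕ, ∑ t ∈ Finset.Icc 1 τ, ρ ^ (τ - t) * a t
        ≤ K + ε' * ((τ:ℝ) * (1 - ρ)⁻¹) := by
      intro τ
      have step1 : ∑ t ∈ Finset.Icc 1 τ, ρ ^ (τ - t) * a t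
          ≤ ∑ t ∈ Finset.Icc 1 τ,
              ((if t ≤ N then a t else 0) + ε' * (ρ ^ (τ - t) * (τ:ℝ))) := by
        apply Finset.sum_le_sum
        intro t ht
        obtain ⟨ht1, ht2⟩ := Finset.mem_Icc.1 ht
        have hpow : (0:ℝ) ≤ ρ ^ (τ - t) := by positivity
        have hpow1 : ρ ^ (τ - t) ≤ 1 := pow_le_one₀ hρ0.le hρ1.le
        have htleτ : (t:ℝ) ≤ τ := by exact_mod_cast ht2
        by_cases hcase : t ≤ N
        · simp only [hcase, if_true]
          have h1 : ρ ^ (τ - t) * a t ≤ a t := by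
            nlinarith [ha t]
          nlinarith [mul_nonneg hpow (Nat.cast_nonneg (α := ℝ) t), ha t,
            mul_nonneg hε'.le (mul_nonneg hpow (Nat.cast_nonneg (α := ℝ) τ))]
        · simp only [hcase, if_false, zero_add]
          push_neg at hcase
          have h1 : a t ≤ ε' * t := haN t hcase.le
          calc ρ ^ (τ - t) * a t ≤ ρ ^ (τ - t) * (ε' * t) :=
              mul_le_mul_of_nonneg_left h1 hpow
            _ ≤ ρ ^ (τ - t) * (ε' * τ) := by
              apply mul_le_mul_of_nonneg_left _ hpow
              exact mul_le_mul_of_nonneg_left htleτ hε'.le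
            _ = ε' * (ρ ^ (τ - t) * (τ:ℝ)) := by ring
      have step2 : ∑ t ∈ Finset.Icc 1 τ, (if t ≤ N then a t else 0) ≤ K := by
        rw [← Finset.sum_filter]
        apply Finset.sum_le_sum_of_subset_of_nonneg
        · intro t ht
          simp only [Finset.mem_filter, Finset.mem_Icc] at ht ⊢
          omega
        · intro t _ _; exact ha t
      have step3 : ∑ t ∈ Finset.Icc 1 τ, ε' * (ρ ^ (τ - t) * (τ:ℝ))
          ≤ ε' * ((τ:ℝ) * (1 - ρ)⁻¹) := by
        have : ∑ t ∈ Finset.Icc 1 τ, ε' * (ρ ^ (τ - t) * (τ:ℝ))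
            = ε' * (τ:ℝ) * ∑ t ∈ Finset.Icc 1 τ, ρ ^ (τ - t) := by
          rw [Finset.mul_sum]
          apply Finset.sum_congr rfl
          intro t _; ring
        rw [this]
        have h2 := hgeo τ
        have : ε' * (τ:ℝ) * ∑ t ∈ Finset.Icc 1 τ, ρ ^ (τ - t)
            ≤ ε' * (τ:ℝ) * (1-ρ)⁻¹ :=
          mul_le_mul_of_nonneg_left h2 (by positivity)
        linarith [this]
      calc ∑ t ∈ Finset.Icc 1 τ, ρ ^ (τ - t) * a t
          ≤ ∑ t ∈ Finset.Icc 1 τ,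
              ((if t ≤ N then a t else 0) + ε' * (ρ ^ (τ - t) * (τ:ℝ))) := step1
        _ = (∑ t ∈ Finset.Icc 1 τ, (if t ≤ N then a t else 0))
            + ∑ t ∈ Finset.Icc 1 τ, ε' * (ρ ^ (τ - t) * (τ:ℝ)) := Finset.sum_add_distrib
        _ ≤ K + ε' * ((τ:ℝ) * (1 - ρ)⁻¹) := add_le_add step2 step3
    -- choose τ₀
    have hhalf : ε' * (1 - ρ)⁻¹ = ε / 2 := by
      field_simp [hε'def]
      ring
    obtain ⟨T, hT⟩ : ∃ T : ℕ, ∀ τ ≥ T, (τ:ℝ)⁻¹ * K < ε / 2 := by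
      have h := (hinv.mul_const K).eventually_lt_const
        (show (0:ℝ)*K < ε/2 by simpa using half_pos hε)
      exact eventually_atTop.1 h
    refine ⟨max T 1, fun τ hτ => ?_⟩
    have hτT : T ≤ τ := le_trans (le_max_left _ _) hτ
    have hτ1 : 1 ≤ τ := le_trans (le_max_right _ _) hτ
    have hτpos : (0:ℝ) < τ := by exact_mod_cast hτ1
    have hsnn : 0 ≤ ∑ t ∈ Finset.Icc 1 τ, ρ ^ (τ - t) * a t :=
      Finset.sum_nonneg fun t _ => mul_nonneg (by positivity) (ha t)
    rw [Real.dist_eq, sub_zero, abs_of_nonneg (mul_nonneg (by positivity) hsnn)]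
    have h1 : (τ:ℝ)⁻¹ * ∑ t ∈ Finset.Icc 1 τ, ρ ^ (τ - t) * a t
        ≤ (τ:ℝ)⁻¹ * (K + ε' * ((τ:ℝ) * (1 - ρ)⁻¹)) :=
      mul_le_mul_of_nonneg_left (hbound2 τ) (by positivity)
    have h2 : (τ:ℝ)⁻¹ * (K + ε' * ((τ:ℝ) * (1 - ρ)⁻¹))
        = (τ:ℝ)⁻¹ * K + ε' * (1 - ρ)⁻¹ := by
      field_simp
    have h3 := hT τ hτT
    rw [h2, hhalf] at h1
    linarith
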